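/- In the setting of the preceding model (k i.i.d. pairs of b-bit hash values with per-pair collision probability P_b, one-hot encoded and count-sketched with B bins and Rademacher weights), define the estimator P̂_b = ⟨z,w⟩/k. Then E[P̂_b] = P_b and Var(P̂_b) = P_b(1−P_b)/k + (1/B)·[1 + P_b² − P_b²/k − P_b/k]. -/

import Mathlib

/-!
Write `⟨z, w⟩ = ∑_{i,i'} x_i y_{i'} r_i r_{i'} 1{h(i) = h(i')}`. Since `r_i² = 1` the diagonal
terms add up to `⟨x, y⟩`; the off-diagonal terms have mean zero, and two of them are correlated
only when they come from the same unordered pair `{i, i'}`, with covariance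
`P(h(i) = h(i')) = 1/B`. So for fixed `x, y`, `E⟨z, w⟩ = ⟨x, y⟩` and
`E⟨z, w⟩² = ⟨x, y⟩² + (‖x‖²‖y‖² + ⟨x, y⟩² - 2 ∑ x_i² y_i²) / B`.

For the one-hot encodings `‖x‖² = ‖y‖² = k` and `⟨x, y⟩ = ∑ x_i² y_i² = C`, the number of `j`
with `X_j = Y_j`, a sum of `k` independent Bernoulli(`P_b`) variables. The data take finitely
many values and are independent of the sketch, so the moments of `⟨z, w⟩` are the averages of
the conditional ones: `E⟨z, w⟩ = E C = k P_b` and `E⟨z, w⟩² = E C² + (k² + E C² - 2 E C) / B`,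
with `E C² = k P_b (1 - P_b) + k² P_b²`.
-/

open MeasureTheory ProbabilityTheory
open scoped ENNReal

noncomputable def oneHotSketch {Ω : Type*} {k n B : ℕ} (X : Fin k → Ω → Fin n)
    (h : Fin k × Fin n → Ω → Fin B) (r : Fin k × Fin n → Ω → ℝ) (j : Fin B) (ω : Ω) : ℝ :=
  ∑ i : Fin k × Fin n, (if X i.1 ω = i.2 then 1 else 0) * r i ω * (if h i ω = j then 1 else 0)

@[fun_prop]
lemma Measurable.ite_eq_one_zero {α β : Type*} [MeasurableSpace α] [MeasurableSpace β]
    [MeasurableEq β] [DecidableEq β] {f g : α → β} (hf : Measurable f) (hg : Measurable g) :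
    Measurable fun a => if f a = g a then (1 : ℝ) else 0 :=
  Measurable.ite (measurableSet_eq_fun hf hg) measurable_const measurable_const

section Indicator

variable {Ω : Type*} [MeasurableSpace Ω] {P : Measure Ω} {p : Ω → Prop} [DecidablePred p]

lemma integral_ite_eq_measureReal (hp : MeasurableSet {ω | p ω}) :
    ∫ ω, (if p ω then (1 : ℝ) else 0) ∂P = P.real {ω | p ω} := by
  rw [← integral_indicator_one hp]
  congr with ω
  simp [Set.indicator_apply]

lemma integrable_ite_one_zero [IsFiniteMeasure P] (hp : MeasurableSet {ω | p ω}) :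
    Integrable (fun ω => if p ω then (1 : ℝ) else 0) P :=
  .of_bound (Measurable.ite hp measurable_const measurable_const).aestronglyMeasurable 1
    (ae_of_all _ fun ω => by split_ifs <;> simp)

lemma variance_ite_one_zero [IsProbabilityMeasure P] (hp : MeasurableSet {ω | p ω}) :
    variance (fun ω => if p ω then (1 : ℝ) else 0) P =
      P.real {ω | p ω} * (1 - P.real {ω | p ω}) := by
  have hsq : (fun ω => if p ω then (1 : ℝ) else 0) ^ 2 = fun ω => if p ω then 1 else 0 := by
    ext ω
    split_ifs <;> simp [*]
  have hmem : MemLp (fun ω => if p ω then (1 : ℝ) else 0) 2 P :=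
    memLp_of_bounded (a := 0) (b := 1) (ae_of_all _ fun ω => by split_ifs <;> simp)
      (Measurable.ite hp measurable_const measurable_const).aestronglyMeasurable 2
  rw [variance_eq_sub hmem, hsq, integral_ite_eq_measureReal hp]
  ring

end Indicator

lemma Finset.sum_product_self_eq_sum_add_sum_offDiag {ι M : Type*} [DecidableEq ι]
    [AddCommMonoid M] (s : Finset ι) (f : ι × ι → M) :
    ∑ p ∈ s ×ˢ s, f p = ∑ i ∈ s, f (i, i) + ∑ p ∈ s.offDiag, f p := by
  rw [← Finset.diag_union_offDiag, Finset.sum_union (Finset.disjoint_diag_offDiag _),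
    Finset.sum_diag]

lemma Finset.sum_offDiag_mul {ι R : Type*} [DecidableEq ι] [CommRing R] (s : Finset ι)
    (f g : ι → R) :
    ∑ p ∈ s.offDiag, f p.1 * g p.2 =
      (∑ i ∈ s, f i) * (∑ i ∈ s, g i) - ∑ i ∈ s, f i * g i := by
  rw [Finset.sum_mul_sum, ← Finset.sum_product', Finset.sum_product_self_eq_sum_add_sum_offDiag]
  ring

lemma ProbabilityTheory.IndepFun.measureReal_eq_of_uniform {Ω β : Type*} [MeasurableSpace Ω]
    {P : Measure Ω} [IsProbabilityMeasure P] [Fintype β] [MeasurableSpace β]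
    [MeasurableSingletonClass β]
    {f g : Ω → β} (hfg : IndepFun f g P) (hfm : Measurable f) (hgm : Measurable g)
    (hf : ∀ b, P {ω | f ω = b} = (Fintype.card β : ℝ≥0∞)⁻¹) :
    P.real {ω | f ω = g ω} = (Fintype.card β : ℝ)⁻¹ := by
  have hset : {ω | f ω = g ω} = ⋃ b ∈ Finset.univ, f ⁻¹' {b} ∩ g ⁻¹' {b} := by
    ext ω
    simp [eq_comm]
  have hdisj : Set.PairwiseDisjoint (Finset.univ : Finset β) fun b => f ⁻¹' {b} ∩ g ⁻¹' {b} :=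
    (Set.pairwiseDisjoint_fiber g _).mono_on fun b _ => Set.inter_subset_right
  have hfib {φ : Ω → β} (hφ : Measurable φ) b : MeasurableSet (φ ⁻¹' {b}) :=
    hφ (measurableSet_singleton b)
  rw [measureReal_def, hset,
    measure_biUnion_finset hdisj fun b _ => (hfib hfm b).inter (hfib hgm b),
    Finset.sum_congr rfl fun b _ => hfg.measure_inter_preimage_eq_mul _ _
      (measurableSet_singleton b) (measurableSet_singleton b)]
  simp only [show ∀ b, P (f ⁻¹' {b}) = (Fintype.card β : ℝ≥0∞)⁻¹ from hf]
  rw [← Finset.mul_sum, sum_measure_preimage_singleton _ fun b _ => hfib hgm b]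
  simp

section Rademacher

variable {Ω : Type*} [MeasurableSpace Ω] {P : Measure Ω} [IsProbabilityMeasure P]

lemma ae_abs_eq_one_of_rademacher {ρ : Ω → ℝ} (hρ : Measurable ρ)
    (h₁ : P {ω | ρ ω = 1} = 1 / 2) (h₂ : P {ω | ρ ω = -1} = 1 / 2) :
    ∀ᵐ ω ∂P, |ρ ω| = 1 := by
  have hdisj : Disjoint {ω | ρ ω = 1} {ω | ρ ω = -1} := by
    rw [Set.disjoint_left]
    intro ω (h₁ : ρ ω = 1) (h₂ : ρ ω = -1)
    norm_num [h₁] at h₂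
  have hm₁ : MeasurableSet {ω | ρ ω = 1} := hρ (measurableSet_singleton 1)
  have hm₂ : MeasurableSet {ω | ρ ω = -1} := hρ (measurableSet_singleton (-1))
  have hfull : {ω | ρ ω = 1} ∪ {ω | ρ ω = -1} ∈ ae P := by
    rw [mem_ae_iff, prob_compl_eq_zero_iff (hm₁.union hm₂), measure_union hdisj hm₂, h₁,
      h₂, ENNReal.add_halves]
  filter_upwards [hfull] with ω hω
  rcases hω with (hω : ρ ω = 1) | (hω : ρ ω = -1) <;> simp [hω]

lemma integral_eq_zero_of_rademacher {ρ : Ω → ℝ} (hρ : Measurable ρ)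
    (h₁ : P {ω | ρ ω = 1} = 1 / 2) (h₂ : P {ω | ρ ω = -1} = 1 / 2) :
    ∫ ω, ρ ω ∂P = 0 := by
  have hm₁ : MeasurableSet {ω | ρ ω = 1} := hρ (measurableSet_singleton 1)
  have hm₂ : MeasurableSet {ω | ρ ω = -1} := hρ (measurableSet_singleton (-1))
  have hsplit : ρ =ᵐ[P] fun ω =>
      {ω | ρ ω = 1}.indicator 1 ω - {ω | ρ ω = -1}.indicator 1 ω := by
    filter_upwards [ae_abs_eq_one_of_rademacher hρ h₁ h₂] with ω hω
    rcases (abs_eq zero_le_one).mp hω with hω | hω <;> norm_num [Set.indicator_apply, hω]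
  rw [integral_congr_ae hsplit, integral_sub ((integrable_const 1).indicator hm₁)
    ((integrable_const 1).indicator hm₂), integral_indicator_one hm₁,
    integral_indicator_one hm₂, measureReal_def, measureReal_def, h₁, h₂, sub_self]

variable {ι : Type*} {r : ι → Ω → ℝ}

lemma ProbabilityTheory.iIndepFun.integral_mul_eq_ite [DecidableEq ι] (hr : iIndepFun r P)
    (hsign : ∀ i, ∀ᵐ ω ∂P, |r i ω| = 1) (hmean : ∀ i, ∫ ω, r i ω ∂P = 0)
    (hrm : ∀ i, Measurable (r i)) (a b : ι) :
    ∫ ω, r a ω * r b ω ∂P = if a = b then 1 else 0 := by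
  split_ifs with hab
  · subst hab
    rw [integral_congr_ae (g := fun _ => 1) ?_, integral_const, probReal_univ, smul_eq_mul,
      mul_one]
    filter_upwards [hsign a] with ω hω
    rw [← abs_mul_abs_self, hω, one_mul]
  · rw [(hr.indepFun hab).integral_fun_mul_eq_mul_integral (hrm a).aestronglyMeasurable
      (hrm b).aestronglyMeasurable, hmean, zero_mul]

lemma ProbabilityTheory.iIndepFun.integral_mul_mul_mul_eq_ite [DecidableEq ι]
    (hr : iIndepFun r P)
    (hsign : ∀ i, ∀ᵐ ω ∂P, |r i ω| = 1) (hmean : ∀ i, ∫ ω, r i ω ∂P = 0)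
    (hrm : ∀ i, Measurable (r i)) (a b c d : ι) :
    ∫ ω, r a ω * r b ω * r c ω * r d ω ∂P =
      if (a = b ∧ c = d) ∨ (a = c ∧ b = d) ∨ (a = d ∧ b = c) then 1 else 0 := by
  have hsq : ∀ᵐ ω ∂P, r a ω * r a ω = 1 := by
    filter_upwards [hsign a] with ω hω
    rw [← abs_mul_abs_self, hω, one_mul]
  have hpair := hr.integral_mul_eq_ite hsign hmean hrm
  by_cases hab : a = b
  · subst hab
    rw [integral_congr_ae (g := fun ω => r c ω * r d ω) (by
      filter_upwards [hsq] with ω hω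
      rw [hω, one_mul]), hpair]
    grind
  by_cases hac : a = c
  · subst hac
    rw [integral_congr_ae (g := fun ω => r b ω * r d ω) (by
      filter_upwards [hsq] with ω hω
      linear_combination r b ω * r d ω * hω), hpair]
    grind
  by_cases had : a = d
  · subst had
    rw [integral_congr_ae (g := fun ω => r b ω * r c ω) (by
      filter_upwards [hsq] with ω hω
      linear_combination r b ω * r c ω * hω), hpair]
    grind
  -- `a` occurs once, and `r a` is independent of the other three factors.
  have hdisj : Disjoint ({b, c, d} : Finset ι) {a} := by
    simp only [Finset.disjoint_singleton_right, Finset.mem_insert, Finset.mem_singleton]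
    grind
  have hindep : IndepFun (fun ω => r b ω * r c ω * r d ω) (r a) P :=
    (hr.indepFun_finset _ _ hdisj hrm).comp
      (φ := fun v : ({b, c, d} : Finset ι) → ℝ =>
        v ⟨b, by simp⟩ * v ⟨c, by simp⟩ * v ⟨d, by simp⟩)
      (ψ := fun v : ({a} : Finset ι) → ℝ => v ⟨a, by simp⟩) (by fun_prop)
      (measurable_pi_apply _ : Measurable fun v : ({a} : Finset ι) → ℝ => v ⟨a, by simp⟩)
  rw [if_neg (by grind), integral_congr_ae (g := fun ω => (r b ω * r c ω * r d ω) * r a ω)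
    (ae_of_all _ fun ω => by ring), hindep.integral_fun_mul_eq_mul_integral (by fun_prop)
    (by fun_prop)]
  simp [hmean]

end Rademacher

section FiniteConditioning

lemma apply_eq_sum_indicator {Ω δ M : Type*} [Fintype δ] [AddCommMonoid M]
    (G : Ω → δ → M) (D : Ω → δ) (ω : Ω) :
    G ω (D ω) = ∑ d, (D ⁻¹' {d}).indicator (fun ω => G ω d) ω := by
  classical
  simp [Set.indicator_apply, eq_comm]

variable {Ω α δ : Type*} [MeasurableSpace Ω] {P : Measure Ω}
  [Fintype δ] [MeasurableSpace δ] [MeasurableSingletonClass δ] {D : Ω → δ}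

lemma memLp_apply_of_fintype {p : ℝ≥0∞} (hD : Measurable D) {G : Ω → δ → ℝ}
    (hG : ∀ d, MemLp (fun ω => G ω d) p P) : MemLp (fun ω => G ω (D ω)) p P := by
  simp_rw [apply_eq_sum_indicator G D]
  exact memLp_finsetSum _ fun d _ => (hG d).indicator (hD (measurableSet_singleton d))

lemma integral_comp_of_fintype [IsFiniteMeasure P] (hD : Measurable D) (g : δ → ℝ) :
    ∫ ω, g (D ω) ∂P = ∑ d, g d * P.real (D ⁻¹' {d}) := by
  have hmeas d : MeasurableSet (D ⁻¹' {d}) := hD (measurableSet_singleton d)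
  simp_rw [apply_eq_sum_indicator (fun _ => g) D]
  rw [integral_finsetSum _ fun d _ => (integrable_const (g d)).indicator (hmeas d)]
  simp [integral_indicator_const _ (hmeas _), mul_comm]

lemma ProbabilityTheory.IndepFun.integral_comp_eq_integral_integral [MeasurableSpace α]
    [IsProbabilityMeasure P] {V : Ω → α} (hVD : IndepFun V D P) (hD : Measurable D)
    {F : α → δ → ℝ} (hF : ∀ d, Measurable (F · d))
    (hFi : ∀ d, Integrable (fun ω => F (V ω) d) P) :
    ∫ ω, F (V ω) (D ω) ∂P = ∫ ω, (∫ ω', F (V ω') (D ω) ∂P) ∂P := by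
  have hmeas d : MeasurableSet (D ⁻¹' {d}) := hD (measurableSet_singleton d)
  rw [integral_comp_of_fintype hD (fun d => ∫ ω', F (V ω') d ∂P),
    integral_congr_ae (ae_of_all _ (apply_eq_sum_indicator (fun ω d => F (V ω) d) D)),
    integral_finsetSum _ fun d _ => (hFi d).indicator (hmeas d)]
  refine Finset.sum_congr rfl fun d _ => ?_
  have hind : IndepFun (fun ω => F (V ω) d) (fun ω => ({d} : Set δ).indicator 1 (D ω)) P :=
    hVD.comp (ψ := ({d} : Set δ).indicator (1 : δ → ℝ)) (hF d)
      (measurable_one.indicator (measurableSet_singleton d))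
  have hsplit : (D ⁻¹' {d}).indicator (fun ω => F (V ω) d) =
      fun ω => F (V ω) d * ({d} : Set δ).indicator 1 (D ω) := by
    ext ω
    by_cases hω : D ω = d <;> simp [hω]
  have hpre : (fun ω => ({d} : Set δ).indicator (1 : δ → ℝ) (D ω)) =
      (D ⁻¹' {d}).indicator 1 := by
    ext ω
    by_cases hω : D ω = d <;> simp [hω]
  rw [hsplit, hind.integral_fun_mul_eq_mul_integral (hFi d).aestronglyMeasurable
    ((measurable_one.indicator (measurableSet_singleton d)).comp hD).aestronglyMeasurable,
    hpre, integral_indicator_one (hmeas d)]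

end FiniteConditioning

section CountSketch

variable {ι β : Type*} [DecidableEq β]

def countSketch [Fintype ι] (x : ι → ℝ) (η : ι → β) (ρ : ι → ℝ) (j : β) : ℝ :=
  ∑ i, x i * ρ i * if η i = j then 1 else 0

def sketchInner [Fintype ι] [Fintype β] (x y : ι → ℝ) (η : ι → β) (ρ : ι → ℝ) : ℝ :=
  ∑ j, countSketch x η ρ j * countSketch y η ρ j

def signedCollision (η : ι → β) (ρ : ι → ℝ) (p : ι × ι) : ℝ :=
  ρ p.1 * ρ p.2 * if η p.1 = η p.2 then 1 else 0

lemma sketchInner_eq_sum_signedCollision [Fintype ι] [Fintype β] (x y : ι → ℝ) (η : ι → β)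
    (ρ : ι → ℝ) :
    sketchInner x y η ρ = ∑ p : ι × ι, x p.1 * y p.2 * signedCollision η ρ p := by
  simp only [sketchInner, countSketch, Finset.sum_mul_sum, signedCollision]
  rw [Finset.sum_comm, Fintype.sum_prod_type]
  refine Finset.sum_congr rfl fun i _ => ?_
  rw [Finset.sum_comm]
  refine Finset.sum_congr rfl fun i' _ => ?_
  simp only [mul_ite, mul_one, mul_zero, ite_mul, zero_mul]
  simp only [Finset.sum_ite_eq', Finset.mem_univ, if_true, eq_comm (a := η i')]
  split_ifs <;> ring

lemma sketchInner_eq_add_sum_offDiag [Fintype ι] [DecidableEq ι] [Fintype β] (x y : ι → ℝ)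
    (η : ι → β) {ρ : ι → ℝ} (hρ : ∀ i, |ρ i| = 1) :
    sketchInner x y η ρ = ∑ i, x i * y i +
      ∑ p ∈ Finset.univ.offDiag, x p.1 * y p.2 * signedCollision η ρ p := by
  rw [sketchInner_eq_sum_signedCollision, ← Finset.univ_product_univ,
    Finset.sum_product_self_eq_sum_add_sum_offDiag]
  congr 1
  refine Finset.sum_congr rfl fun i _ => ?_
  simp [signedCollision, ← abs_mul_abs_self (ρ i), hρ]

lemma measurable_sketchInner [Fintype ι] [Fintype β] [MeasurableSpace β] [MeasurableEq β]
    (x y : ι → ℝ) : Measurable fun v : (ι → β) × (ι → ℝ) => sketchInner x y v.1 v.2 := by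
  simp only [sketchInner, countSketch]
  fun_prop

variable {Ω : Type*} [MeasurableSpace Ω] {P : Measure Ω} {h : ι → Ω → β} {r : ι → Ω → ℝ}

lemma ae_sketchInner_eq [Fintype ι] [DecidableEq ι] [Fintype β]
    (hsign : ∀ i, ∀ᵐ ω ∂P, |r i ω| = 1) (x y : ι → ℝ) :
    ∀ᵐ ω ∂P, sketchInner x y (fun i => h i ω) (fun i => r i ω) =
      ∑ i, x i * y i + ∑ p ∈ Finset.univ.offDiag,
        x p.1 * y p.2 * signedCollision (fun i => h i ω) (fun i => r i ω) p := by
  filter_upwards [ae_all_iff.2 hsign] with ω hω using sketchInner_eq_add_sum_offDiag x y _ hω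

variable [MeasurableSpace β] [MeasurableEq β]

lemma memLp_top_signedCollision (hh : ∀ i, Measurable (h i)) (hrm : ∀ i, Measurable (r i))
    (hsign : ∀ i, ∀ᵐ ω ∂P, |r i ω| = 1) (p : ι × ι) :
    MemLp (fun ω => signedCollision (fun i => h i ω) (fun i => r i ω) p) ∞ P := by
  refine memLp_top_of_bound (by unfold signedCollision; fun_prop) 1 ?_
  filter_upwards [hsign p.1, hsign p.2] with ω h₁ h₂
  simp only [signedCollision, Real.norm_eq_abs, abs_mul, h₁, h₂, one_mul]
  split_ifs <;> simp

lemma integral_signedCollision [IsProbabilityMeasure P] [DecidableEq ι]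
    (hhr : IndepFun (fun ω i => h i ω) (fun ω i => r i ω) P) (hr : iIndepFun r P)
    (hsign : ∀ i, ∀ᵐ ω ∂P, |r i ω| = 1) (hmean : ∀ i, ∫ ω, r i ω ∂P = 0)
    (hh : ∀ i, Measurable (h i)) (hrm : ∀ i, Measurable (r i)) {p : ι × ι} (hp : p.1 ≠ p.2) :
    ∫ ω, signedCollision (fun i => h i ω) (fun i => r i ω) p ∂P = 0 := by
  have hind : IndepFun (fun ω => if h p.1 ω = h p.2 ω then (1 : ℝ) else 0)
      (fun ω => r p.1 ω * r p.2 ω) P :=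
    hhr.comp (φ := fun η : ι → β => if η p.1 = η p.2 then (1 : ℝ) else 0)
      (ψ := fun ρ : ι → ℝ => ρ p.1 * ρ p.2) (by fun_prop) (by fun_prop)
  simp only [signedCollision]
  rw [integral_congr_ae (ae_of_all _ fun ω => mul_comm _ _),
    hind.integral_fun_mul_eq_mul_integral (by fun_prop) (by fun_prop),
    hr.integral_mul_eq_ite hsign hmean hrm, if_neg hp, mul_zero]

lemma integral_signedCollision_mul [IsProbabilityMeasure P] [DecidableEq ι]
    (hhr : IndepFun (fun ω i => h i ω) (fun ω i => r i ω) P) (hr : iIndepFun r P)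
    (hsign : ∀ i, ∀ᵐ ω ∂P, |r i ω| = 1) (hmean : ∀ i, ∫ ω, r i ω ∂P = 0)
    (hh : ∀ i, Measurable (h i)) (hrm : ∀ i, Measurable (r i)) {c : ℝ}
    (hcoll : ∀ i i', i ≠ i' → P.real {ω | h i ω = h i' ω} = c)
    {p q : ι × ι} (hp : p.1 ≠ p.2) (hq : q.1 ≠ q.2) :
    ∫ ω, signedCollision (fun i => h i ω) (fun i => r i ω) p *
        signedCollision (fun i => h i ω) (fun i => r i ω) q ∂P =
      (if q = p then c else 0) + (if q = p.swap then c else 0) := by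
  have hind : IndepFun (fun ω => (if h p.1 ω = h p.2 ω then (1 : ℝ) else 0) *
      (if h q.1 ω = h q.2 ω then (1 : ℝ) else 0))
      (fun ω => r p.1 ω * r p.2 ω * r q.1 ω * r q.2 ω) P :=
    hhr.comp (φ := fun η : ι → β => (if η p.1 = η p.2 then (1 : ℝ) else 0) *
        (if η q.1 = η q.2 then (1 : ℝ) else 0))
      (ψ := fun ρ : ι → ℝ => ρ p.1 * ρ p.2 * ρ q.1 * ρ q.2) (by fun_prop) (by fun_prop)
  have hfactor : ∀ ω, signedCollision (fun i => h i ω) (fun i => r i ω) p *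
      signedCollision (fun i => h i ω) (fun i => r i ω) q =
      ((if h p.1 ω = h p.2 ω then (1 : ℝ) else 0) * (if h q.1 ω = h q.2 ω then 1 else 0)) *
        (r p.1 ω * r p.2 ω * r q.1 ω * r q.2 ω) := fun ω => by
    simp only [signedCollision]
    ring
  rw [integral_congr_ae (ae_of_all _ hfactor),
    hind.integral_fun_mul_eq_mul_integral (by fun_prop) (by fun_prop),
    hr.integral_mul_mul_mul_eq_ite hsign hmean hrm]
  -- The signs pair off only for `q = p` or `q = p.swap`, where the two indicators agree.
  by_cases hqp : q = p ∨ q = p.swap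
  · have hcollide : ∀ ω, (if h p.1 ω = h p.2 ω then (1 : ℝ) else 0) *
        (if h q.1 ω = h q.2 ω then 1 else 0) = if h p.1 ω = h p.2 ω then 1 else 0 := by
      intro ω
      by_cases hc : h p.1 ω = h p.2 ω <;> rcases hqp with rfl | rfl <;> simp [hc, eq_comm]
    rw [integral_congr_ae (ae_of_all _ hcollide),
      integral_ite_eq_measureReal (measurableSet_eq_fun (hh _) (hh _)), hcoll _ _ hp]
    rcases hqp with rfl | rfl <;> simp [Prod.ext_iff, hp, Ne.symm hp]
  · rw [if_neg (by grind), if_neg (by grind), if_neg (by grind)]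
    simp

variable [Fintype ι] [DecidableEq ι]

lemma integral_sum_offDiag_signedCollision [IsProbabilityMeasure P]
    (hhr : IndepFun (fun ω i => h i ω) (fun ω i => r i ω) P) (hr : iIndepFun r P)
    (hsign : ∀ i, ∀ᵐ ω ∂P, |r i ω| = 1) (hmean : ∀ i, ∫ ω, r i ω ∂P = 0)
    (hh : ∀ i, Measurable (h i)) (hrm : ∀ i, Measurable (r i)) (a : ι × ι → ℝ) :
    ∫ ω, ∑ p ∈ Finset.univ.offDiag,
      a p * signedCollision (fun i => h i ω) (fun i => r i ω) p ∂P = 0 := by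
  rw [integral_finsetSum _ fun p _ =>
    ((memLp_top_signedCollision hh hrm hsign p).integrable le_top).const_mul _]
  refine Finset.sum_eq_zero fun p hp => ?_
  rw [integral_const_mul, integral_signedCollision hhr hr hsign hmean hh hrm
    (Finset.mem_offDiag.1 hp).2.2, mul_zero]

lemma integral_sum_offDiag_signedCollision_sq [IsProbabilityMeasure P]
    (hhr : IndepFun (fun ω i => h i ω) (fun ω i => r i ω) P) (hr : iIndepFun r P)
    (hsign : ∀ i, ∀ᵐ ω ∂P, |r i ω| = 1) (hmean : ∀ i, ∫ ω, r i ω ∂P = 0)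
    (hh : ∀ i, Measurable (h i)) (hrm : ∀ i, Measurable (r i)) {c : ℝ}
    (hcoll : ∀ i i', i ≠ i' → P.real {ω | h i ω = h i' ω} = c) (a : ι × ι → ℝ) :
    ∫ ω, (∑ p ∈ Finset.univ.offDiag,
      a p * signedCollision (fun i => h i ω) (fun i => r i ω) p) ^ 2 ∂P =
      c * ∑ p ∈ Finset.univ.offDiag, a p * (a p + a p.swap) := by
  set W := fun p ω => signedCollision (fun i => h i ω) (fun i => r i ω) p
  have hW p : MemLp (W p) ∞ P := memLp_top_signedCollision hh hrm hsign p
  have hWW p q : Integrable (fun ω => a p * W p ω * (a q * W q ω)) P := by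
    simpa only [mul_mul_mul_comm] using
      (((hW q).mul' (hW p)).integrable le_top).const_mul (a p * a q)
  simp only [sq, Finset.sum_mul_sum]
  rw [integral_finsetSum _ fun p _ => integrable_finsetSum _ fun q _ => hWW p q, Finset.mul_sum]
  refine Finset.sum_congr rfl fun p hp => ?_
  have hswap : p.swap ∈ Finset.univ.offDiag := by simpa [eq_comm] using hp
  rw [integral_finsetSum _ fun q _ => hWW p q]
  simp_rw [mul_mul_mul_comm (a p), integral_const_mul]
  rw [Finset.sum_congr rfl fun q hq => by rw [integral_signedCollision_mul hhr hr hsign hmean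
    hh hrm hcoll (Finset.mem_offDiag.1 hp).2.2 (Finset.mem_offDiag.1 hq).2.2]]
  simp only [mul_add, mul_ite, mul_zero, Finset.sum_add_distrib, Finset.sum_ite_eq', hp,
    hswap, if_true]
  ring

variable [Fintype β]

lemma memLp_top_sketchInner (hh : ∀ i, Measurable (h i)) (hrm : ∀ i, Measurable (r i))
    (hsign : ∀ i, ∀ᵐ ω ∂P, |r i ω| = 1) (x y : ι → ℝ) :
    MemLp (fun ω => sketchInner x y (fun i => h i ω) (fun i => r i ω)) ∞ P := by
  have hoff : MemLp (fun ω => ∑ p ∈ Finset.univ.offDiag,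
      x p.1 * y p.2 * signedCollision (fun i => h i ω) (fun i => r i ω) p) ∞ P :=
    memLp_finsetSum _ fun p _ => (memLp_top_signedCollision hh hrm hsign p).const_mul _
  have hsum : MemLp (fun ω => ∑ i, x i * y i + ∑ p ∈ Finset.univ.offDiag,
      x p.1 * y p.2 * signedCollision (fun i => h i ω) (fun i => r i ω) p) ∞ P :=
    (memLp_top_const (∑ i, x i * y i)).add hoff
  exact hsum.ae_eq <| by
    filter_upwards [ae_sketchInner_eq (h := h) hsign x y] with ω hω using hω.symm

lemma integral_sketchInner [IsProbabilityMeasure P]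
    (hhr : IndepFun (fun ω i => h i ω) (fun ω i => r i ω) P) (hr : iIndepFun r P)
    (hsign : ∀ i, ∀ᵐ ω ∂P, |r i ω| = 1) (hmean : ∀ i, ∫ ω, r i ω ∂P = 0)
    (hh : ∀ i, Measurable (h i)) (hrm : ∀ i, Measurable (r i)) (x y : ι → ℝ) :
    ∫ ω, sketchInner x y (fun i => h i ω) (fun i => r i ω) ∂P = ∑ i, x i * y i := by
  rw [integral_congr_ae (ae_sketchInner_eq hsign x y), integral_add (integrable_const _)
    (integrable_finsetSum _ fun p _ =>
      ((memLp_top_signedCollision hh hrm hsign p).integrable le_top).const_mul _),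
    integral_sum_offDiag_signedCollision hhr hr hsign hmean hh hrm, integral_const,
    probReal_univ, one_smul, add_zero]

lemma integral_sketchInner_sq [IsProbabilityMeasure P]
    (hhr : IndepFun (fun ω i => h i ω) (fun ω i => r i ω) P) (hr : iIndepFun r P)
    (hsign : ∀ i, ∀ᵐ ω ∂P, |r i ω| = 1) (hmean : ∀ i, ∫ ω, r i ω ∂P = 0)
    (hh : ∀ i, Measurable (h i)) (hrm : ∀ i, Measurable (r i)) {c : ℝ}
    (hcoll : ∀ i i', i ≠ i' → P.real {ω | h i ω = h i' ω} = c) (x y : ι → ℝ) :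
    ∫ ω, sketchInner x y (fun i => h i ω) (fun i => r i ω) ^ 2 ∂P =
      (∑ i, x i * y i) ^ 2 + c * ((∑ i, x i ^ 2) * (∑ i, y i ^ 2) + (∑ i, x i * y i) ^ 2
        - 2 * ∑ i, x i ^ 2 * y i ^ 2) := by
  set O := fun ω => ∑ p ∈ Finset.univ.offDiag,
    x p.1 * y p.2 * signedCollision (fun i => h i ω) (fun i => r i ω) p
  have hO : MemLp O ∞ P :=
    memLp_finsetSum _ fun p _ => (memLp_top_signedCollision hh hrm hsign p).const_mul _
  have hsq : ∀ᵐ ω ∂P, sketchInner x y (fun i => h i ω) (fun i => r i ω) ^ 2 =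
      ((∑ i, x i * y i) ^ 2 + 2 * (∑ i, x i * y i) * O ω) + O ω ^ 2 := by
    filter_upwards [ae_sketchInner_eq (h := h) hsign x y] with ω hω
    rw [hω]
    ring
  have hpairs : ∑ p ∈ Finset.univ.offDiag, x p.1 * y p.2 * (x p.1 * y p.2 + x p.2 * y p.1) =
      (∑ i, x i ^ 2) * (∑ i, y i ^ 2) + (∑ i, x i * y i) ^ 2 - 2 * ∑ i, x i ^ 2 * y i ^ 2 := by
    calc _ = ∑ p ∈ Finset.univ.offDiag, x p.1 ^ 2 * y p.2 ^ 2 +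
          ∑ p ∈ Finset.univ.offDiag, x p.1 * y p.1 * (x p.2 * y p.2) := by
          rw [← Finset.sum_add_distrib]
          exact Finset.sum_congr rfl fun p _ => by ring
      _ = _ := by
          rw [Finset.sum_offDiag_mul _ (fun i => x i ^ 2) (fun i => y i ^ 2),
            Finset.sum_offDiag_mul _ (fun i => x i * y i) (fun i => x i * y i)]
          simp only [mul_pow, ← sq]
          ring
  have hlin : Integrable (fun ω => (∑ i, x i * y i) ^ 2 + 2 * (∑ i, x i * y i) * O ω) P :=
    (integrable_const _).add ((hO.integrable le_top).const_mul _)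
  rw [integral_congr_ae hsq, integral_add hlin (by simpa [sq] using (hO.mul' hO).integrable le_top),
    integral_add (integrable_const _) ((hO.integrable le_top).const_mul _), integral_const,
    integral_const_mul, integral_sum_offDiag_signedCollision hhr hr hsign hmean hh hrm,
    integral_sum_offDiag_signedCollision_sq hhr hr hsign hmean hh hrm hcoll]
  simp only [Prod.fst_swap, Prod.snd_swap, hpairs, probReal_univ, one_smul, mul_zero, add_zero]

end CountSketch

def oneHot {κ A : Type*} [DecidableEq A] (v : κ → A) (i : κ × A) : ℝ :=
  if v i.1 = i.2 then 1 else 0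

def matchCount {κ A : Type*} [Fintype κ] [DecidableEq A] (u v : κ → A) : ℝ :=
  ∑ j, if u j = v j then 1 else 0

section MatchCount

variable {κ A : Type*} [Fintype κ] [DecidableEq A]

lemma sum_oneHot_mul_oneHot [Fintype A] (u v : κ → A) :
    ∑ i, oneHot u i * oneHot v i = matchCount u v := by
  simp only [oneHot, matchCount, Fintype.sum_prod_type, mul_ite, mul_one, mul_zero]
  refine Finset.sum_congr rfl fun j _ => ?_
  simp [Finset.sum_ite_eq', eq_comm]

lemma sum_oneHot_sq [Fintype A] (v : κ → A) : ∑ i, oneHot v i ^ 2 = Fintype.card κ := by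
  simpa [matchCount, sq] using sum_oneHot_mul_oneHot v v

lemma sum_oneHot_sq_mul_oneHot_sq [Fintype A] (u v : κ → A) :
    ∑ i, oneHot u i ^ 2 * oneHot v i ^ 2 = matchCount u v := by
  rw [← sum_oneHot_mul_oneHot]
  congr with i
  simp [oneHot]

variable {Ω : Type*} [MeasurableSpace Ω] {P : Measure Ω} [IsProbabilityMeasure P]
  [MeasurableSpace A] [MeasurableEq A] {X Y : κ → Ω → A}

lemma integral_matchCount (hX : ∀ j, Measurable (X j)) (hY : ∀ j, Measurable (Y j)) {p : ℝ}
    (hmatch : ∀ j, P.real {ω | X j ω = Y j ω} = p) :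
    ∫ ω, matchCount (fun j => X j ω) (fun j => Y j ω) ∂P = Fintype.card κ * p := by
  unfold matchCount
  rw [integral_finsetSum _ fun j _ => integrable_ite_one_zero (measurableSet_eq_fun (hX j) (hY j))]
  simp [integral_ite_eq_measureReal (measurableSet_eq_fun (hX _) (hY _)), hmatch]

lemma variance_matchCount (hXY : iIndepFun (fun j ω => (X j ω, Y j ω)) P)
    (hX : ∀ j, Measurable (X j)) (hY : ∀ j, Measurable (Y j)) {p : ℝ}
    (hmatch : ∀ j, P.real {ω | X j ω = Y j ω} = p) :
    variance (fun ω => matchCount (fun j => X j ω) (fun j => Y j ω)) P =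
      Fintype.card κ * (p * (1 - p)) := by
  have hsum : (fun ω => matchCount (fun j => X j ω) (fun j => Y j ω)) =
      ∑ j, fun ω => if X j ω = Y j ω then (1 : ℝ) else 0 := by
    ext ω
    simp [matchCount]
  have hindep : Set.Pairwise (Finset.univ : Finset κ) fun i j =>
      IndepFun (fun ω => if X i ω = Y i ω then (1 : ℝ) else 0)
        (fun ω => if X j ω = Y j ω then (1 : ℝ) else 0) P := fun i _ j _ hij =>
    (hXY.indepFun hij).comp (φ := fun z : A × A => if z.1 = z.2 then (1 : ℝ) else 0)
      (ψ := fun z : A × A => if z.1 = z.2 then (1 : ℝ) else 0) (by fun_prop) (by fun_prop)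
  rw [hsum, IndepFun.variance_sum (fun j _ => memLp_of_bounded (a := 0) (b := 1)
    (ae_of_all _ fun ω => by split_ifs <;> simp) (by fun_prop) 2) hindep]
  simp [variance_ite_one_zero (measurableSet_eq_fun (hX _) (hY _)), hmatch]

lemma memLp_top_matchCount (hX : ∀ j, Measurable (X j)) (hY : ∀ j, Measurable (Y j)) :
    MemLp (fun ω => matchCount (fun j => X j ω) (fun j => Y j ω)) ∞ P :=
  memLp_finsetSum _ fun j _ => memLp_of_bounded (a := 0) (b := 1)
    (ae_of_all _ fun ω => by split_ifs <;> simp) (by fun_prop) ∞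

lemma integral_matchCount_sq (hXY : iIndepFun (fun j ω => (X j ω, Y j ω)) P)
    (hX : ∀ j, Measurable (X j)) (hY : ∀ j, Measurable (Y j)) {p : ℝ}
    (hmatch : ∀ j, P.real {ω | X j ω = Y j ω} = p) :
    ∫ ω, matchCount (fun j => X j ω) (fun j => Y j ω) ^ 2 ∂P =
      Fintype.card κ * (p * (1 - p)) + (Fintype.card κ * p) ^ 2 := by
  have := variance_eq_sub ((memLp_top_matchCount (P := P) hX hY).mono_exponent le_top)
  rw [variance_matchCount hXY hX hY hmatch, integral_matchCount hX hY hmatch] at this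
  rw [this]
  simp

end MatchCount

section OneHotSketch

variable {Ω κ A β : Type*} [MeasurableSpace Ω] {P : Measure Ω}
  [Fintype κ] [DecidableEq κ] [Fintype A] [DecidableEq A]
  [Fintype β] [DecidableEq β] [MeasurableSpace β] [MeasurableEq β]
  {h : κ × A → Ω → β} {r : κ × A → Ω → ℝ}

lemma integral_sketchInner_oneHot [IsProbabilityMeasure P]
    (hhr : IndepFun (fun ω i => h i ω) (fun ω i => r i ω) P) (hr : iIndepFun r P)
    (hsign : ∀ i, ∀ᵐ ω ∂P, |r i ω| = 1) (hmean : ∀ i, ∫ ω, r i ω ∂P = 0)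
    (hh : ∀ i, Measurable (h i)) (hrm : ∀ i, Measurable (r i)) (u v : κ → A) :
    ∫ ω, sketchInner (oneHot u) (oneHot v) (fun i => h i ω) (fun i => r i ω) ∂P =
      matchCount u v := by
  rw [integral_sketchInner hhr hr hsign hmean hh hrm, sum_oneHot_mul_oneHot]

lemma integral_sketchInner_oneHot_sq [IsProbabilityMeasure P]
    (hhr : IndepFun (fun ω i => h i ω) (fun ω i => r i ω) P) (hr : iIndepFun r P)
    (hsign : ∀ i, ∀ᵐ ω ∂P, |r i ω| = 1) (hmean : ∀ i, ∫ ω, r i ω ∂P = 0)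
    (hh : ∀ i, Measurable (h i)) (hrm : ∀ i, Measurable (r i)) {c : ℝ}
    (hcoll : ∀ i i', i ≠ i' → P.real {ω | h i ω = h i' ω} = c) (u v : κ → A) :
    ∫ ω, sketchInner (oneHot u) (oneHot v) (fun i => h i ω) (fun i => r i ω) ^ 2 ∂P =
      matchCount u v ^ 2 +
        c * (Fintype.card κ ^ 2 + matchCount u v ^ 2 - 2 * matchCount u v) := by
  rw [integral_sketchInner_sq hhr hr hsign hmean hh hrm hcoll, sum_oneHot_sq, sum_oneHot_sq,
    sum_oneHot_mul_oneHot, sum_oneHot_sq_mul_oneHot_sq]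
  ring

variable [MeasurableSpace A] [MeasurableEq A] {X Y : κ → Ω → A}

lemma memLp_top_sketchInner_oneHot_comp (hh : ∀ i, Measurable (h i))
    (hrm : ∀ i, Measurable (r i)) (hsign : ∀ i, ∀ᵐ ω ∂P, |r i ω| = 1)
    (hX : ∀ j, Measurable (X j)) (hY : ∀ j, Measurable (Y j)) :
    MemLp (fun ω => sketchInner (oneHot fun j => X j ω) (oneHot fun j => Y j ω)
      (fun i => h i ω) (fun i => r i ω)) ∞ P :=
  memLp_apply_of_fintype (D := fun ω j => (X j ω, Y j ω)) (by fun_prop)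
    (G := fun ω d => sketchInner (oneHot fun j => (d j).1) (oneHot fun j => (d j).2)
      (fun i => h i ω) (fun i => r i ω))
    fun _ => memLp_top_sketchInner hh hrm hsign _ _

lemma integral_sketchInner_oneHot_comp [IsProbabilityMeasure P]
    (hhr : IndepFun (fun ω i => h i ω) (fun ω i => r i ω) P) (hr : iIndepFun r P)
    (hsign : ∀ i, ∀ᵐ ω ∂P, |r i ω| = 1) (hmean : ∀ i, ∫ ω, r i ω ∂P = 0)
    (hh : ∀ i, Measurable (h i)) (hrm : ∀ i, Measurable (r i))
    (hsk : IndepFun (fun ω => (fun i => h i ω, fun i => r i ω)) (fun ω j => (X j ω, Y j ω)) P)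
    (hX : ∀ j, Measurable (X j)) (hY : ∀ j, Measurable (Y j)) {p : ℝ}
    (hmatch : ∀ j, P.real {ω | X j ω = Y j ω} = p) :
    ∫ ω, sketchInner (oneHot fun j => X j ω) (oneHot fun j => Y j ω)
      (fun i => h i ω) (fun i => r i ω) ∂P = Fintype.card κ * p := by
  refine (hsk.integral_comp_eq_integral_integral (by fun_prop)
    (F := fun v d => sketchInner (oneHot fun j => (d j).1) (oneHot fun j => (d j).2) v.1 v.2)
    (fun _ => measurable_sketchInner _ _)
    fun _ => (memLp_top_sketchInner hh hrm hsign _ _).integrable le_top).trans ?_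
  simpa [integral_sketchInner_oneHot hhr hr hsign hmean hh hrm] using
    integral_matchCount hX hY hmatch

lemma integral_sketchInner_oneHot_comp_sq [IsProbabilityMeasure P]
    (hhr : IndepFun (fun ω i => h i ω) (fun ω i => r i ω) P) (hr : iIndepFun r P)
    (hsign : ∀ i, ∀ᵐ ω ∂P, |r i ω| = 1) (hmean : ∀ i, ∫ ω, r i ω ∂P = 0)
    (hh : ∀ i, Measurable (h i)) (hrm : ∀ i, Measurable (r i)) {c : ℝ}
    (hcoll : ∀ i i', i ≠ i' → P.real {ω | h i ω = h i' ω} = c)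
    (hsk : IndepFun (fun ω => (fun i => h i ω, fun i => r i ω)) (fun ω j => (X j ω, Y j ω)) P)
    (hXY : iIndepFun (fun j ω => (X j ω, Y j ω)) P)
    (hX : ∀ j, Measurable (X j)) (hY : ∀ j, Measurable (Y j)) {p : ℝ}
    (hmatch : ∀ j, P.real {ω | X j ω = Y j ω} = p) :
    ∫ ω, sketchInner (oneHot fun j => X j ω) (oneHot fun j => Y j ω)
      (fun i => h i ω) (fun i => r i ω) ^ 2 ∂P =
      Fintype.card κ * p + (Fintype.card κ ^ 2 - Fintype.card κ) * p ^ 2 +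
        c * (Fintype.card κ ^ 2 - Fintype.card κ * p +
          (Fintype.card κ ^ 2 - Fintype.card κ) * p ^ 2) := by
  set C := fun ω => matchCount (fun j => X j ω) (fun j => Y j ω)
  have hC := memLp_top_matchCount (P := P) hX hY
  have hC₁ : Integrable C P := hC.integrable le_top
  have hC₂ : Integrable (fun ω => C ω ^ 2) P := by
    simpa [sq] using (hC.mul' hC).integrable le_top
  have hpoly : Integrable (fun ω => (1 + c) * C ω ^ 2 - 2 * c * C ω) P :=
    (hC₂.const_mul _).sub (hC₁.const_mul _)
  refine (hsk.integral_comp_eq_integral_integral (by fun_prop)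
    (F := fun v d => sketchInner (oneHot fun j => (d j).1) (oneHot fun j => (d j).2) v.1 v.2 ^ 2)
    (fun _ => (measurable_sketchInner _ _).pow_const 2) fun _ => by
      simpa [sq] using ((memLp_top_sketchInner hh hrm hsign _ _).mul'
        (memLp_top_sketchInner hh hrm hsign _ _)).integrable le_top).trans ?_
  simp only [integral_sketchInner_oneHot_sq hhr hr hsign hmean hh hrm hcoll]
  rw [integral_congr_ae (ae_of_all _ fun ω => show C ω ^ 2 + c * (Fintype.card κ ^ 2 + C ω ^ 2 -
    2 * C ω) = ((1 + c) * C ω ^ 2 - 2 * c * C ω) + c * Fintype.card κ ^ 2 by ring),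
    integral_add hpoly (integrable_const _), integral_sub (hC₂.const_mul _) (hC₁.const_mul _),
    integral_const_mul, integral_const_mul, integral_const, integral_matchCount_sq hXY hX hY hmatch,
    integral_matchCount hX hY hmatch, probReal_univ, one_smul]
  ring

end OneHotSketch

theorem gcws_countSketch_estimator_mean_variance_general {Ω : Type*} [MeasurableSpace Ω]
    (P : Measure Ω) [IsProbabilityMeasure P] (b k B : ℕ) (hk : 1 ≤ k)
    (Pb : ℝ) (hPb0 : 0 ≤ Pb)
    (X Y : Fin k → Ω → Fin (2 ^ b))
    (hXm : ∀ j, Measurable (X j)) (hYm : ∀ j, Measurable (Y j))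
    (hpairs_indep : iIndepFun (fun j ω => (X j ω, Y j ω)) P)
    (hcollision : ∀ j, P {ω | X j ω = Y j ω} = ENNReal.ofReal Pb)
    (h : Fin k × Fin (2 ^ b) → Ω → Fin B) (r : Fin k × Fin (2 ^ b) → Ω → ℝ)
    (hhm : ∀ i, Measurable (h i)) (hrm : ∀ i, Measurable (r i))
    (hunif : ∀ i, ∀ j : Fin B, P {ω | h i ω = j} = (B : ℝ≥0∞)⁻¹)
    (hhiid : iIndepFun h P)
    (hriid : iIndepFun r P)
    (hrad : ∀ i, P {ω | r i ω = 1} = 1 / 2 ∧ P {ω | r i ω = -1} = 1 / 2)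
    (hhr : IndepFun (fun ω i => h i ω) (fun ω i => r i ω) P)
    (hsk_XY : IndepFun (fun ω => (fun i => h i ω, fun i => r i ω))
      (fun ω => fun j => (X j ω, Y j ω)) P) :
    ∫ ω, (∑ j, oneHotSketch X h r j ω * oneHotSketch Y h r j ω) / k ∂P = Pb ∧
      variance (fun ω => (∑ j, oneHotSketch X h r j ω * oneHotSketch Y h r j ω) / k) P
        = Pb * (1 - Pb) / k
          + (1 / B) * (1 + Pb ^ 2 - Pb ^ 2 / k - Pb / k) := by
  have hsign i := ae_abs_eq_one_of_rademacher (hrm i) (hrad i).1 (hrad i).2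
  have hmean i := integral_eq_zero_of_rademacher (hrm i) (hrad i).1 (hrad i).2
  have hcoll i i' (hne : i ≠ i') : P.real {ω | h i ω = h i' ω} = (B : ℝ)⁻¹ := by
    simpa using (hhiid.indepFun hne).measureReal_eq_of_uniform (hhm i) (hhm i')
      (by simpa using hunif i)
  have hmatch j : P.real {ω | X j ω = Y j ω} = Pb := by
    rw [measureReal_def, hcollision, ENNReal.toReal_ofReal hPb0]
  set S := fun ω => sketchInner (oneHot fun j => X j ω) (oneHot fun j => Y j ω)
    (fun i => h i ω) (fun i => r i ω)
  change ∫ ω, S ω / k ∂P = Pb ∧ variance (fun ω => S ω / k) P = _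
  have hES := integral_sketchInner_oneHot_comp hhr hriid hsign hmean hhm hrm hsk_XY hXm hYm hmatch
  have hES2 := integral_sketchInner_oneHot_comp_sq hhr hriid hsign hmean hhm hrm hcoll hsk_XY
    hpairs_indep hXm hYm hmatch
  simp only [Fintype.card_fin] at hES hES2
  have hk₀ : (k : ℝ) ≠ 0 := Nat.cast_ne_zero.2 (by omega)
  refine ⟨by rw [integral_div, hES]; field_simp, ?_⟩
  rw [show (fun ω => S ω / k) = fun ω => S ω * (k : ℝ)⁻¹ from funext fun _ => div_eq_mul_inv _ _,
    variance_mul_const, variance_eq_sub ((memLp_top_sketchInner_oneHot_comp hhm hrm hsign hXm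
      hYm).mono_exponent le_top)]
  simp only [Pi.pow_apply]
  rw [hES2, hES]
  field_simp
  ring

/-- in the model of `k` i.i.d. pairs of `b`-bit hash values with per-pair
collision probability `P_b`, one-hot encoded and count-sketched with `B` bins and
Rademacher weights, the estimator `P̂_b = ⟨z,w⟩/k` satisfies `E[P̂_b] = P_b` and
`Var(P̂_b) = P_b(1-P_b)/k + (1/B)·[1 + P_b² - P_b²/k - P_b/k]`. -/
theorem gcws_countSketch_estimator_mean_variance {Ω : Type*} [MeasurableSpace Ω]
    (P : Measure Ω) [IsProbabilityMeasure P] (b k B : ℕ) (hb : 1 ≤ b) (hk : 1 ≤ k)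
    (hB : 1 ≤ B) (Pb : ℝ) (hPb0 : 0 ≤ Pb) (hPb1 : Pb ≤ 1)
    (X Y : Fin k → Ω → Fin (2 ^ b))
    (hXm : ∀ j, Measurable (X j)) (hYm : ∀ j, Measurable (Y j))
    (hpairs_indep : iIndepFun (fun j ω => (X j ω, Y j ω)) P)
    (hpairs_ident : ∀ j j', IdentDistrib (fun ω => (X j ω, Y j ω))
      (fun ω => (X j' ω, Y j' ω)) P P)
    (hcollision : ∀ j, P {ω | X j ω = Y j ω} = ENNReal.ofReal Pb)
    (h : Fin k × Fin (2 ^ b) → Ω → Fin B) (r : Fin k × Fin (2 ^ b) → Ω → ℝ)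
    (hhm : ∀ i, Measurable (h i)) (hrm : ∀ i, Measurable (r i))
    (hunif : ∀ i, ∀ j : Fin B, P {ω | h i ω = j} = (B : ℝ≥0∞)⁻¹)
    (hhiid : iIndepFun h P)
    (hriid : iIndepFun r P)
    (hrad : ∀ i, P {ω | r i ω = 1} = 1 / 2 ∧ P {ω | r i ω = -1} = 1 / 2)
    (hhr : IndepFun (fun ω i => h i ω) (fun ω i => r i ω) P)
    (hsk_XY : IndepFun (fun ω => (fun i => h i ω, fun i => r i ω))
      (fun ω => fun j => (X j ω, Y j ω)) P) :
    ∫ ω, (∑ j, oneHotSketch X h r j ω * oneHotSketch Y h r j ω) / k ∂P = Pb ∧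
      variance (fun ω => (∑ j, oneHotSketch X h r j ω * oneHotSketch Y h r j ω) / k) P
        = Pb * (1 - Pb) / k
          + (1 / B) * (1 + Pb ^ 2 - Pb ^ 2 / k - Pb / k) :=
  gcws_countSketch_estimator_mean_variance_general P b k B hk Pb hPb0 X Y hXm hYm hpairs_indep
    hcollision h r hhm hrm hunif hhiid hriid hrad hhr hsk_XY
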